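/- In the Greedy time-independent algorithm, two adjacent agents whose goals lie on opposite sides (so each agent's unique greedy next node is the other agent's tail) reach a permanent deadlock: both become requesting with head equal to the other's tail, and no further activation can ever change either mode, so neither agent ever reaches its goal. -/

import Mathlib

/-! Each agent requests the other's tail, which is occupied by the other agent, so the only
enabled activations are blocked ones, and these leave the configuration unchanged. -/

inductive Mode where
  | contracted | requesting | extended
deriving DecidableEq

structure Config (A V : Type*) where
  mode : A → Mode
  tail : A → V
  head : A → Option V

def occupied {A V : Type*} (c : Config A V) (v : V) : Prop :=
  (∃ j, c.tail j = v) ∨ (∃ j, c.mode j = Mode.extended ∧ c.head j = some v)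

/-- One activation of the Greedy time-independent algorithm, where `gc a` is the
unique greedy next node of agent `a` (the neighbor nearest to its goal):
a contracted agent sets its head to its greedy node and becomes requesting;
a requesting agent becomes extended if its head is unoccupied, and otherwise
does nothing; an extended agent becomes contracted, moving its tail to its
head. -/
inductive GreedyStep {A V : Type*} (gc : A → V) : Config A V → Config A V → Prop
  | request (c c' : Config A V) (a : A) :
      c.mode a = Mode.contracted →
      c'.mode a = Mode.requesting → c'.head a = some (gc a) → c'.tail a = c.tail a →
      (∀ b, b ≠ a → c'.mode b = c.mode b ∧ c'.tail b = c.tail b ∧ c'.head b = c.head b) →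
      GreedyStep gc c c'
  | extend (c c' : Config A V) (a : A) (u : V) :
      c.mode a = Mode.requesting → c.head a = some u → ¬ occupied c u →
      c'.mode a = Mode.extended → c'.head a = some u → c'.tail a = c.tail a →
      (∀ b, b ≠ a → c'.mode b = c.mode b ∧ c'.tail b = c.tail b ∧ c'.head b = c.head b) →
      GreedyStep gc c c'
  | blocked (c c' : Config A V) (a : A) (u : V) :
      c.mode a = Mode.requesting → c.head a = some u → occupied c u →
      c' = c →
      GreedyStep gc c c'
  | arrive (c c' : Config A V) (a : A) (u : V) :
      c.mode a = Mode.extended → c.head a = some u →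
      c'.mode a = Mode.contracted → c'.head a = none → c'.tail a = u →
      (∀ b, b ≠ a → c'.mode b = c.mode b ∧ c'.tail b = c.tail b ∧ c'.head b = c.head b) →
      GreedyStep gc c c'

theorem Relation.ReflTransGen.eq_of_forall_step_eq {α : Type*} {r : α → α → Prop} {a b : α}
    (hfix : ∀ b, r a b → b = a) (hab : Relation.ReflTransGen r a b) : b = a := by
  induction hab with
  | refl => rfl
  | tail _ hstep ih =>
    subst ih
    exact hfix _ hstep

theorem occupied_of_tail {A V : Type*} (c : Config A V) (a : A) : occupied c (c.tail a) :=
  Or.inl ⟨a, rfl⟩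

theorem GreedyStep.eq_of_forall_requesting_occupied {A V : Type*} {gc : A → V}
    {c c' : Config A V}
    (hreq : ∀ a, c.mode a = Mode.requesting ∧ ∃ w, c.head a = some w ∧ occupied c w)
    (hstep : GreedyStep gc c c') : c' = c := by
  cases hstep with
  | request a hmode => simp [(hreq a).1] at hmode
  | extend a w _ hhead hfree =>
    obtain ⟨-, w', hw', hocc⟩ := hreq a
    rw [hhead, Option.some.injEq] at hw'
    exact absurd (hw' ▸ hocc) hfree
  | blocked _ _ _ _ _ heq => exact heq
  | arrive a _ hmode => simp [(hreq a).1] at hmode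

theorem greedy_permanent_deadlock_general
    {A V : Type*} (gc : A → V) (a₁ a₂ : A)
    (hA : ∀ a : A, a = a₁ ∨ a = a₂)
    (u v : V)
    (c₀ : Config A V)
    (hmode : c₀.mode a₁ = Mode.requesting ∧ c₀.mode a₂ = Mode.requesting)
    (htail : c₀.tail a₁ = u ∧ c₀.tail a₂ = v)
    (hhead : c₀.head a₁ = some v ∧ c₀.head a₂ = some u)
    (g₁ g₂ : V) (hgoal₁ : g₁ ≠ u) (hgoal₂ : g₂ ≠ v) :
    ∀ c : Config A V, Relation.ReflTransGen (GreedyStep gc) c₀ c →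
      c = c₀ ∧ c.tail a₁ ≠ g₁ ∧ c.tail a₂ ≠ g₂ := by
  obtain ⟨hm₁, hm₂⟩ := hmode
  obtain ⟨ht₁, ht₂⟩ := htail
  obtain ⟨hh₁, hh₂⟩ := hhead
  have hreq : ∀ a, c₀.mode a = Mode.requesting ∧ ∃ w, c₀.head a = some w ∧ occupied c₀ w := by
    intro a
    rcases hA a with rfl | rfl
    · exact ⟨hm₁, v, hh₁, ht₂ ▸ occupied_of_tail c₀ a₂⟩
    · exact ⟨hm₂, u, hh₂, ht₁ ▸ occupied_of_tail c₀ a₁⟩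
  intro c hc
  obtain rfl := hc.eq_of_forall_step_eq fun _ ↦ GreedyStep.eq_of_forall_requesting_occupied hreq
  exact ⟨rfl, ht₁ ▸ hgoal₁.symm, ht₂ ▸ hgoal₂.symm⟩

/-- Permanent deadlock of the Greedy algorithm: two adjacent agents `a₁` at `u`
and `a₂` at `v` whose greedy next nodes are each other's tails, both requesting
the other's tail, form a configuration that is a fixed point of every
activation; hence neither agent ever reaches its goal. -/
theorem greedy_permanent_deadlock
    {A V : Type*} (gc : A → V) (a₁ a₂ : A) (ha : a₁ ≠ a₂)
    (hA : ∀ a : A, a = a₁ ∨ a = a₂)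
    (u v : V) (huv : u ≠ v)
    (hg₁ : gc a₁ = v) (hg₂ : gc a₂ = u)
    (c₀ : Config A V)
    (hmode : c₀.mode a₁ = Mode.requesting ∧ c₀.mode a₂ = Mode.requesting)
    (htail : c₀.tail a₁ = u ∧ c₀.tail a₂ = v)
    (hhead : c₀.head a₁ = some v ∧ c₀.head a₂ = some u)
    (g₁ g₂ : V) (hgoal₁ : g₁ ≠ u) (hgoal₂ : g₂ ≠ v) :
    ∀ c : Config A V, Relation.ReflTransGen (GreedyStep gc) c₀ c →
      c = c₀ ∧ c.tail a₁ ≠ g₁ ∧ c.tail a₂ ≠ g₂ :=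
  greedy_permanent_deadlock_general gc a₁ a₂ hA u v c₀ hmode htail hhead g₁ g₂ hgoal₁ hgoal₂
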